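/- arXiv:2605.13287 — 3 statements merged into one kernel-verified Lean document; each statement's English description precedes it below -/
import Mathlib

section
/- For any real-valued random variable X with mean m and finite variance σ², and any threshold v > m, the expected positive part satisfies E[(X - v)⁺] ≤ σ²/(v - m). -/
open MeasureTheory

/-- One-sided second-moment bound: for an integrable random variable `X` with mean `m`
and variance `σ² = E[(X - m)²]`, and any `v > m`, `E[(X - v)⁺] ≤ σ² / (v - m)`. -/
theorem ei_second_moment_bound
    {Ω : Type*} [MeasurableSpace Ω] (μ : Measure Ω) [IsProbabilityMeasure μ]
    (X : Ω → ℝ) (hX : Integrable X μ)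
    (hX2 : Integrable (fun ω => (X ω - ∫ ω', X ω' ∂μ) ^ 2) μ)
    (m σ2 v : ℝ)
    (hm : m = ∫ ω, X ω ∂μ)
    (hσ2 : σ2 = ∫ ω, (X ω - m) ^ 2 ∂μ)
    (hv : m < v) :
    ∫ ω, max (X ω - v) 0 ∂μ ≤ σ2 / (v - m) := by
  have hvm : 0 < v - m := by linarith
  have hX2' : Integrable (fun ω => (X ω - m) ^ 2) μ := by
    simpa [← hm] using hX2
  have hint : Integrable (fun ω => max (X ω - v) 0) μ := by
    exact (hX.sub (integrable_const v)).pos_part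
  have hmono : ∫ ω, max (X ω - v) 0 ∂μ ≤ ∫ ω, (X ω - m) ^ 2 / (v - m) ∂μ := by
    refine integral_mono hint (hX2'.div_const _) ?_
    intro ω
    rw [le_div_iff₀ hvm]
    dsimp only
    rcases le_or_gt (X ω - v) 0 with h | h
    · rw [max_eq_right h]
      nlinarith [sq_nonneg (X ω - m)]
    · rw [max_eq_left h.le]
      nlinarith [sq_nonneg (X ω - v), sq_nonneg (X ω - m - (v - m))]
  calc ∫ ω, max (X ω - v) 0 ∂μ ≤ ∫ ω, (X ω - m) ^ 2 / (v - m) ∂μ := hmono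
    _ = σ2 / (v - m) := by rw [integral_div, ← hσ2]
end

section
/- Let X be a random variable with distribution Beta(1+S, 1+n−S), mean m, and let v > m. Then E[(X − v)⁺] ≤ 1/(4(n+3)(v − m)). -/
/-!
For `m < v` one has `(x - v)⁺ ≤ (x - m)² / (v - m)` pointwise, so
`E[(X - v)⁺] ≤ Var X / (v - m)` when `m` is the mean. The moments of `Beta(α, β)` come from
the Beta integral and `Γ(s + 1) = s Γ(s)`: its variance is `αβ / ((α + β)² (α + β + 1))`,
and `4αβ ≤ (α + β)²`.
-/

open MeasureTheory

/-- The Beta(a, b) distribution on [0,1], defined by its density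
`x^(a-1) (1-x)^(b-1) / B(a,b)` with `B(a,b) = Γ(a)Γ(b)/Γ(a+b)`. -/
noncomputable def betaMeasure (a b : ℝ) : Measure ℝ :=
  (volume.restrict (Set.Icc (0 : ℝ) 1)).withDensity
    (fun x => ENNReal.ofReal
      (x ^ (a - 1) * (1 - x) ^ (b - 1) / (Real.Gamma a * Real.Gamma b / Real.Gamma (a + b))))

theorem max_sub_zero_le_sq_div {m v : ℝ} (hmv : m < v) (x : ℝ) :
    max (x - v) 0 ≤ (x - m) ^ 2 / (v - m) := by
  have hd : 0 < v - m := sub_pos.2 hmv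
  refine max_le ?_ (by positivity)
  rw [le_div_iff₀ hd]
  nlinarith [sq_nonneg (x - m - (v - m) / 2)]

theorem integral_max_sub_zero_le {μ : Measure ℝ} {m v : ℝ} (hmv : m < v)
    (hint : Integrable (fun x => (x - m) ^ 2) μ) :
    ∫ x, max (x - v) 0 ∂μ ≤ (∫ x, (x - m) ^ 2 ∂μ) / (v - m) := by
  rw [← integral_div]
  exact integral_mono_of_nonneg (ae_of_all _ fun x => le_max_right _ _) (hint.div_const _)
    (ae_of_all _ (max_sub_zero_le_sq_div hmv))

open ProbabilityTheory (beta)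

section BetaMoments

variable {α β : ℝ}

theorem integral_rpow_mul_one_sub_rpow (hα : 0 < α) (hβ : 0 < β) :
    ∫ x in (0 : ℝ)..1, x ^ (α - 1) * (1 - x) ^ (β - 1) = beta α β := by
  have hcomplex : Complex.betaIntegral α β
      = ((∫ x in (0 : ℝ)..1, x ^ (α - 1) * (1 - x) ^ (β - 1) : ℝ) : ℂ) := by
    rw [Complex.betaIntegral, ← intervalIntegral.integral_ofReal]
    refine intervalIntegral.integral_congr fun x hx => ?_
    rw [Set.uIcc_of_le zero_le_one] at hx
    push_cast
    rw [Complex.ofReal_cpow hx.1, Complex.ofReal_cpow (sub_nonneg.2 hx.2)]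
    push_cast
    rfl
  rw [ProbabilityTheory.beta_eq_betaIntegralReal α β hα hβ, hcomplex, Complex.ofReal_re]

theorem beta_add_one_left (hα : 0 < α) (hβ : 0 < β) :
    beta (α + 1) β = α / (α + β) * beta α β := by
  have hαβ : 0 < α + β := add_pos hα hβ
  rw [ProbabilityTheory.beta, ProbabilityTheory.beta, add_right_comm,
    Real.Gamma_add_one hα.ne', Real.Gamma_add_one hαβ.ne']
  field_simp [(Real.Gamma_pos_of_pos hαβ).ne']

theorem integral_betaMeasure (hα : 0 < α) (hβ : 0 < β) (f : ℝ → ℝ) :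
    ∫ x, f x ∂betaMeasure α β
      = (∫ x in (0 : ℝ)..1, f x * (x ^ (α - 1) * (1 - x) ^ (β - 1))) / beta α β := by
  rw [betaMeasure, integral_withDensity_eq_integral_toReal_smul (by fun_prop)
    (.of_forall fun _ => ENNReal.ofReal_lt_top), ← intervalIntegral.integral_div,
    intervalIntegral.integral_of_le zero_le_one, ← integral_Icc_eq_integral_Ioc]
  refine setIntegral_congr_fun measurableSet_Icc fun x hx => ?_
  have hdensity : 0 ≤ x ^ (α - 1) * (1 - x) ^ (β - 1) / beta α β :=
    div_nonneg (mul_nonneg (Real.rpow_nonneg hx.1 _) (Real.rpow_nonneg (sub_nonneg.2 hx.2) _))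
      (ProbabilityTheory.beta_pos hα hβ).le
  rw [smul_eq_mul, ← ProbabilityTheory.beta.eq_1, ENNReal.toReal_ofReal hdensity]
  exact (mul_comm _ _).trans (mul_div_assoc _ _ _).symm

theorem integral_pow_betaMeasure (hα : 0 < α) (hβ : 0 < β) (k : ℕ) :
    ∫ x, x ^ k ∂betaMeasure α β = beta (α + k) β / beta α β := by
  rw [integral_betaMeasure hα hβ,
    ← integral_rpow_mul_one_sub_rpow (α := α + k) (by positivity) hβ]
  congr 1
  refine intervalIntegral.integral_congr_ae (ae_of_all _ fun x hx => ?_)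
  rw [Set.uIoc_of_le zero_le_one] at hx
  rw [add_sub_right_comm, Real.rpow_add hx.1, Real.rpow_natCast]
  ring

theorem integral_sub_mean_sq_betaMeasure (hα : 0 < α) (hβ : 0 < β) :
    ∫ x, (x - α / (α + β)) ^ 2 ∂betaMeasure α β = α * β / ((α + β) ^ 2 * (α + β + 1)) := by
  -- Every moment is positive, and a non-integrable function has Bochner integral `0`.
  have hintegrable (k : ℕ) : Integrable (fun x : ℝ => x ^ k) (betaMeasure α β) :=
    Integrable.of_integral_ne_zero <| by
      rw [integral_pow_betaMeasure hα hβ]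
      exact (div_pos (ProbabilityTheory.beta_pos (by positivity) hβ)
        (ProbabilityTheory.beta_pos hα hβ)).ne'
  have h2 : Integrable (fun x : ℝ => x ^ 2) (betaMeasure α β) := hintegrable 2
  have h1 : Integrable (fun x : ℝ => 2 * (α / (α + β)) * x ^ 1) (betaMeasure α β) :=
    (hintegrable 1).const_mul _
  have h0 : Integrable (fun x : ℝ => (α / (α + β)) ^ 2 * x ^ 0) (betaMeasure α β) :=
    (hintegrable 0).const_mul _
  calc ∫ x, (x - α / (α + β)) ^ 2 ∂betaMeasure α β
      = ∫ x, (x ^ 2 - 2 * (α / (α + β)) * x ^ 1 + (α / (α + β)) ^ 2 * x ^ 0) ∂betaMeasure α β := by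
        congr 1; funext x; ring
    _ = (∫ x, x ^ 2 ∂betaMeasure α β) - 2 * (α / (α + β)) * (∫ x, x ^ 1 ∂betaMeasure α β)
          + (α / (α + β)) ^ 2 * ∫ x, x ^ 0 ∂betaMeasure α β := by
        rw [integral_add (h2.sub' h1) h0, integral_sub h2 h1, integral_const_mul,
          integral_const_mul]
    _ = α * β / ((α + β) ^ 2 * (α + β + 1)) := by
        simp only [integral_pow_betaMeasure hα hβ]
        push_cast
        rw [show α + 2 = α + 1 + 1 by ring, beta_add_one_left (by positivity) hβ,
          beta_add_one_left hα hβ, add_zero]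
        have : 0 < α + β := by positivity
        field_simp [(ProbabilityTheory.beta_pos hα hβ).ne']
        ring

theorem integral_sub_mean_sq_betaMeasure_le (hα : 0 < α) (hβ : 0 < β) :
    ∫ x, (x - α / (α + β)) ^ 2 ∂betaMeasure α β ≤ 1 / (4 * (α + β + 1)) := by
  rw [integral_sub_mean_sq_betaMeasure hα hβ, div_le_div_iff₀ (by positivity) (by positivity)]
  nlinarith [sq_nonneg (α - β), mul_pos hα hβ, add_pos hα hβ]

end BetaMoments

/-- EI bound for a Beta posterior: if `X ~ Beta(1+S, 1+n−S)` with mean `m = (1+S)/(n+2)`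
and `v > m`, then `E[(X − v)⁺] ≤ 1/(4(n+3)(v − m))`. -/
theorem beta_ei_bound (n S : ℕ) (hS : S ≤ n) (m v : ℝ)
    (hm : m = (1 + (S : ℝ)) / ((n : ℝ) + 2)) (hv : m < v) :
    ∫ x, max (x - v) 0 ∂(betaMeasure (1 + S) (1 + (n : ℝ) - S))
      ≤ 1 / (4 * ((n : ℝ) + 3) * (v - m)) := by
  have hα : (0 : ℝ) < 1 + S := by positivity
  have hβ : (0 : ℝ) < 1 + n - S := by
    have : (S : ℝ) ≤ n := by exact_mod_cast hS
    linarith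
  set α : ℝ := 1 + S
  set β : ℝ := 1 + n - S
  have hsum : α + β = n + 2 := by ring
  obtain rfl : m = α / (α + β) := by rw [hm, hsum]
  calc _ ≤ (∫ x, (x - α / (α + β)) ^ 2 ∂betaMeasure α β) / (v - α / (α + β)) :=
        integral_max_sub_zero_le hv <| .of_integral_ne_zero <| by
          rw [integral_sub_mean_sq_betaMeasure hα hβ]; positivity
    _ ≤ 1 / (4 * (α + β + 1)) / (v - α / (α + β)) := by
        gcongr
        exact integral_sub_mean_sq_betaMeasure_le hα hβ
    _ = 1 / (4 * ((n : ℝ) + 3) * (v - α / (α + β))) := by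
        rw [div_div, hsum]
        ring
end

section
/- Suppose a suboptimal arm a satisfies v − m ≥ Δ/2 with Δ > 0, where m is its posterior mean after n observations with posterior variance at most 1/(4(n+3)). Then its expected improvement E[(X−v)⁺] ≤ 1/(2(n+3)Δ). -/
open MeasureTheory

/-- EI shut-off for a separated arm: if the posterior `X` has mean `m`, variance at most
`1/(4(n+3))`, and the baseline satisfies `v − m ≥ Δ/2` with `Δ > 0`, then
`E[(X−v)⁺] ≤ 1/(2(n+3)Δ)`. -/
theorem separated_ei_shutoff
    {Ω : Type*} [MeasurableSpace Ω] (μ : Measure Ω) [IsProbabilityMeasure μ]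
    (X : Ω → ℝ) (hX : Integrable X μ)
    (hX2 : Integrable (fun ω => (X ω - ∫ ω', X ω' ∂μ) ^ 2) μ)
    (n : ℕ) (m v Δ : ℝ) (hΔ : 0 < Δ)
    (hm : m = ∫ ω, X ω ∂μ)
    (hvar : (∫ ω, (X ω - m) ^ 2 ∂μ) ≤ 1 / (4 * ((n : ℝ) + 3)))
    (hsep : Δ / 2 ≤ v - m) :
    ∫ ω, max (X ω - v) 0 ∂μ ≤ 1 / (2 * ((n : ℝ) + 3) * Δ) := by
  have hc : 0 < v - m := lt_of_lt_of_le (by positivity) hsep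
  have hint2 : Integrable (fun ω => (X ω - m) ^ 2) μ := by rw [hm]; exact hX2
  have hmax : Integrable (fun ω => max (X ω - v) 0) μ :=
    (hX.sub (integrable_const v)).pos_part
  have hpt : ∀ ω, max (X ω - v) 0 ≤ (X ω - m) ^ 2 / (v - m) := by
    intro ω
    apply max_le _ (by positivity)
    rw [le_div_iff₀ hc]
    nlinarith [sq_nonneg (2 * (X ω - m) - (v - m)), sq_nonneg (v - m)]
  have hvar0 : 0 ≤ ∫ ω, (X ω - m) ^ 2 ∂μ := integral_nonneg fun ω => sq_nonneg _
  calc ∫ ω, max (X ω - v) 0 ∂μ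
      ≤ ∫ ω, (X ω - m) ^ 2 / (v - m) ∂μ :=
        integral_mono hmax (hint2.div_const _) hpt
    _ = (∫ ω, (X ω - m) ^ 2 ∂μ) / (v - m) := integral_div _ _
    _ ≤ (1 / (4 * ((n : ℝ) + 3))) / (Δ / 2) :=
        div_le_div₀ (by positivity) hvar (by positivity) hsep
    _ = 1 / (2 * ((n : ℝ) + 3) * Δ) := by
        have h3 : (0:ℝ) < (n : ℝ) + 3 := by positivity
        field_simp
        ring
end
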